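/- Let N ≥ 1, let S ⊆ ℝ^N be compact, let h ∈ B_S, and let D ⊆ ℝ^N be a measurable set. Let μ > 0 and 0 < τ < 2/(1 + 2μ). Then the regularized operator \hat{T}_h^{(D)} defined by \hat{T}_h^{(D)} f = P_S((1 − μτ) f + τ χ_D(h − f)) is a Banach contraction on B_S with Lipschitz constant 1 − μτ: for all f, g ∈ B_S, ‖\hat{T}_h^{(D)} f − \hat{T}_h^{(D)} g‖ ≤ (1 − μτ)‖f − g‖, and 0 < 1 − μτ < 1. -/

import Mathlib

/-! The pointwise identity `(c • u - τ • χ_D u)(x) = (c - τ) u(x)` on `D` and `c u(x)` off `D`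
shows that `u ↦ c • u - τ • χ_D u` has norm at most `c` as soon as `|c - τ| ≤ c`; for
`c = 1 - μτ` this is exactly the condition `τ (1 + 2μ) ≤ 2`. The regularized operator is this
map applied to `f - g`, followed by an orthogonal projection, which has norm at most `1`. -/

open MeasureTheory FourierTransform Filter

noncomputable section

/-- The Hilbert space `L²(ℝᴺ; ℂ)` of square-integrable functions on `ℝᴺ`. -/
abbrev L2Space (N : ℕ) : Type :=
  Lp ℂ 2 (volume : Measure (EuclideanSpace ℝ (Fin N)))

/-- `f ∈ L²(ℝᴺ)` is bandlimited to `S`: its Fourier transform vanishes (a.e.) outside `S`;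
equivalently, `f` agrees a.e. with the inverse Fourier transform of an integrable function `F`
vanishing outside `S`. -/
def IsBandlimited {N : ℕ} (S : Set (EuclideanSpace ℝ (Fin N))) (f : L2Space N) : Prop :=
  ∃ F : EuclideanSpace ℝ (Fin N) → ℂ,
    Integrable F ∧ (∀ k, k ∉ S → F k = 0) ∧
      (f : EuclideanSpace ℝ (Fin N) → ℂ) =ᵐ[volume] 𝓕⁻ F

/-- Multiplication of `f ∈ L²` by the indicator function `χ_D`, as an element of `L²`. -/
def chiMul {N : ℕ} {D : Set (EuclideanSpace ℝ (Fin N))} (hD : MeasurableSet D)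
    (f : L2Space N) : L2Space N :=
  ((Lp.memLp f).indicator hD).toLp (D.indicator f)

/-- The orthogonal projection of `L²(ℝᴺ)` onto a closed subspace `K`. -/
def projOf {N : ℕ} (K : Submodule ℂ (L2Space N)) (hK : IsClosed (K : Set (L2Space N))) :
    L2Space N → L2Space N :=
  haveI : CompleteSpace K := hK.completeSpace_coe
  fun f => (K.orthogonalProjectionOnto f : L2Space N)

/-- The operator `T_h^{(D)} f = P_S (f + χ_D (h − f))` (single region). -/
def Tsingle {N : ℕ} (K : Submodule ℂ (L2Space N)) (hK : IsClosed (K : Set (L2Space N)))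
    {D : Set (EuclideanSpace ℝ (Fin N))} (hD : MeasurableSet D)
    (h f : L2Space N) : L2Space N :=
  projOf K hK (f + chiMul hD (h - f))

/-- The regularized operator `T̂_h^{(D)} f = P_S ((1 − μτ) f + τ χ_D (h − f))`. -/
def TsingleReg {N : ℕ} (K : Submodule ℂ (L2Space N)) (hK : IsClosed (K : Set (L2Space N)))
    {D : Set (EuclideanSpace ℝ (Fin N))} (hD : MeasurableSet D)
    (μ τ : ℝ) (h f : L2Space N) : L2Space N :=
  projOf K hK ((1 - μ * τ) • f + τ • chiMul hD (h - f))

section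

variable {N : ℕ} {D : Set (EuclideanSpace ℝ (Fin N))} (hD : MeasurableSet D)

include hD in
theorem coeFn_chiMul (u : L2Space N) : (chiMul hD u : _ → ℂ) =ᵐ[volume] D.indicator u :=
  MemLp.coeFn_toLp _

theorem chiMul_sub (a b : L2Space N) : chiMul hD (a - b) = chiMul hD a - chiMul hD b := by
  rw [chiMul, chiMul, chiMul, ← MemLp.toLp_sub]
  refine MemLp.toLp_congr _ _ ?_
  rw [← Set.indicator_sub']
  exact (Lp.coeFn_sub a b).indicator

theorem norm_smul_sub_smul_chiMul_le {c τ : ℝ} (hcτ : |c - τ| ≤ c) (u : L2Space N) :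
    ‖c • u - τ • chiMul hD u‖ ≤ c * ‖u‖ := by
  refine Lp.norm_le_mul_norm_of_ae_le_mul ?_
  filter_upwards [Lp.coeFn_sub (c • u) (τ • chiMul hD u), Lp.coeFn_smul c u,
    Lp.coeFn_smul τ (chiMul hD u), coeFn_chiMul hD u] with x hsub hcu hτu hχu
  rw [hsub, Pi.sub_apply, hcu, hτu, Pi.smul_apply, Pi.smul_apply, hχu]
  by_cases hx : x ∈ D
  · rw [Set.indicator_of_mem hx, ← sub_smul, norm_smul, Real.norm_eq_abs]
    exact mul_le_mul_of_nonneg_right hcτ (norm_nonneg _)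
  · rw [Set.indicator_of_notMem hx, smul_zero, sub_zero, norm_smul, Real.norm_eq_abs,
      abs_of_nonneg ((abs_nonneg _).trans hcτ)]

end

section

variable {N : ℕ} (K : Submodule ℂ (L2Space N)) (hK : IsClosed (K : Set (L2Space N)))

theorem projOf_sub (a b : L2Space N) : projOf K hK a - projOf K hK b = projOf K hK (a - b) := by
  simp only [projOf, map_sub, Submodule.coe_sub]

theorem norm_projOf_le (a : L2Space N) : ‖projOf K hK a‖ ≤ ‖a‖ :=
  haveI : CompleteSpace K := hK.completeSpace_coe
  K.norm_orthogonalProjectionOnto_apply_le a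

theorem TsingleReg_sub {D : Set (EuclideanSpace ℝ (Fin N))} (hD : MeasurableSet D)
    (μ τ : ℝ) (h f g : L2Space N) :
    TsingleReg K hK hD μ τ h f - TsingleReg K hK hD μ τ h g =
      projOf K hK ((1 - μ * τ) • (f - g) - τ • chiMul hD (f - g)) := by
  rw [TsingleReg, TsingleReg, projOf_sub]
  congr 1
  have hχ : chiMul hD (h - f) - chiMul hD (h - g) = -chiMul hD (f - g) := by
    rw [← chiMul_sub, show h - f - (h - g) = g - f by abel, chiMul_sub, chiMul_sub hD f g,
      neg_sub]
  linear_combination (norm := module) τ • hχ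

theorem norm_TsingleReg_sub_le {D : Set (EuclideanSpace ℝ (Fin N))} (hD : MeasurableSet D)
    {μ τ : ℝ} (hμτ : |1 - μ * τ - τ| ≤ 1 - μ * τ) (h f g : L2Space N) :
    ‖TsingleReg K hK hD μ τ h f - TsingleReg K hK hD μ τ h g‖ ≤ (1 - μ * τ) * ‖f - g‖ := by
  rw [TsingleReg_sub]
  exact (norm_projOf_le K hK _).trans (norm_smul_sub_smul_chiMul_le hD hμτ _)

end

theorem regularization_constant_bounds {μ τ : ℝ} (hμ : 0 < μ) (hτ0 : 0 < τ)
    (hτ : τ < 2 / (1 + 2 * μ)) :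
    |1 - μ * τ - τ| ≤ 1 - μ * τ ∧ 0 < 1 - μ * τ ∧ 1 - μ * τ < 1 := by
  have hτμ : τ * (1 + 2 * μ) < 2 := (lt_div_iff₀ (by linarith)).mp hτ
  exact ⟨abs_le.mpr ⟨by nlinarith, by linarith⟩, by nlinarith, by nlinarith⟩

theorem regularized_contraction_single_general (N : ℕ)
    (S : Set (EuclideanSpace ℝ (Fin N)))
    (K : Submodule ℂ (L2Space N))
    (hK : IsClosed (K : Set (L2Space N)))
    (h : L2Space N)
    (D : Set (EuclideanSpace ℝ (Fin N))) (hD : MeasurableSet D)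
    (μ τ : ℝ) (hμ : 0 < μ) (hτ0 : 0 < τ) (hτ : τ < 2 / (1 + 2 * μ)) :
    (∀ f g : L2Space N, IsBandlimited S f → IsBandlimited S g →
        ‖TsingleReg K hK hD μ τ h f - TsingleReg K hK hD μ τ h g‖ ≤
          (1 - μ * τ) * ‖f - g‖) ∧
      0 < 1 - μ * τ ∧ 1 - μ * τ < 1 := by
  obtain ⟨hcτ, hc_pos, hc_lt⟩ := regularization_constant_bounds hμ hτ0 hτ
  exact ⟨fun f g _ _ => norm_TsingleReg_sub_le K hK hD hcτ h f g, hc_pos, hc_lt⟩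

/-- For `h ∈ B_S`, `D` measurable, `μ > 0` and `0 < τ < 2/(1 + 2μ)`, the
regularized operator `T̂_h^{(D)} f = P_S((1 − μτ) f + τ χ_D(h − f))` is a Banach contraction
on `B_S` with Lipschitz constant `1 − μτ ∈ (0,1)`. -/
theorem regularized_contraction_single (N : ℕ) (hN : 1 ≤ N)
    (S : Set (EuclideanSpace ℝ (Fin N))) (hS : IsCompact S)
    (K : Submodule ℂ (L2Space N))
    (hKset : (K : Set (L2Space N)) = {f : L2Space N | IsBandlimited S f})
    (hK : IsClosed (K : Set (L2Space N)))
    (h : L2Space N) (hh : IsBandlimited S h)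
    (D : Set (EuclideanSpace ℝ (Fin N))) (hD : MeasurableSet D)
    (μ τ : ℝ) (hμ : 0 < μ) (hτ0 : 0 < τ) (hτ : τ < 2 / (1 + 2 * μ)) :
    (∀ f g : L2Space N, IsBandlimited S f → IsBandlimited S g →
        ‖TsingleReg K hK hD μ τ h f - TsingleReg K hK hD μ τ h g‖ ≤
          (1 - μ * τ) * ‖f - g‖) ∧
      0 < 1 - μ * τ ∧ 1 - μ * τ < 1 :=
  regularized_contraction_single_general N S K hK h D hD μ τ hμ hτ0 hτ
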